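/- If ⊗ is the tensor product of a closed symmetric monoidal structure on the category Graph of reflexive graphs, then ⊗ is naturally isomorphic either to the box product □ or to the categorical product ⊠; hence Graph carries, up to isomorphism of the tensor product, exactly two closed symmetric monoidal structures, namely the box product and the categorical product, each with unit the one-vertex graph I_0. -/

import Mathlib

open CategoryTheory MonoidalCategory

/-- The category of (reflexive) graphs: an object is a set of vertices with an
irreflexive symmetric adjacency relation. -/
structure GraphCat : Type 1 where
  V : Type
  adj : V → V → Prop
  symm : ∀ {v w : V}, adj v w → adj w v
  loopless : ∀ v : V, ¬ adj v v

namespace GraphCat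

/-- A graph map: whenever `v ∼ w`, either `f v = f w` or `f v ∼ f w`. -/
structure Hom (X Y : GraphCat) where
  toFun : X.V → Y.V
  map_adj : ∀ {v w : X.V}, X.adj v w → toFun v = toFun w ∨ Y.adj (toFun v) (toFun w)

theorem Hom.ext' {X Y : GraphCat} {f g : Hom X Y} (h : f.toFun = g.toFun) : f = g := by
  cases f; cases g; cases h; rfl

instance : Category GraphCat where
  Hom := Hom
  id X := ⟨fun v => v, fun h => Or.inr h⟩
  comp f g := ⟨fun v => g.toFun (f.toFun v), fun {v w} h => by
    rcases f.map_adj h with h' | h'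
    · exact Or.inl (congrArg g.toFun h')
    · exact g.map_adj h'⟩
  id_comp f := Hom.ext' rfl
  comp_id f := Hom.ext' rfl
  assoc f g h := Hom.ext' rfl

/-- The one-vertex graph `I₀`. -/
def I0 : GraphCat := ⟨PUnit, fun _ _ => False, fun h => h, fun _ h => h⟩

/-- The graph `I₁` with two vertices `s = false` and `t = true` joined by an edge. -/
def I1 : GraphCat := ⟨Bool, fun v w => v ≠ w, Ne.symm, fun _ h => h rfl⟩

/-- The box product of graphs: `(v,v') ∼ (w,w')` iff (`v ∼ w` and `v' = w'`) or
(`v = w` and `v' ∼ w'`). -/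
def boxProd (X Y : GraphCat) : GraphCat where
  V := X.V × Y.V
  adj p q := (X.adj p.1 q.1 ∧ p.2 = q.2) ∨ (p.1 = q.1 ∧ Y.adj p.2 q.2)
  symm := by
    rintro p q (⟨h, e⟩ | ⟨e, h⟩)
    · exact Or.inl ⟨X.symm h, e.symm⟩
    · exact Or.inr ⟨e.symm, Y.symm h⟩
  loopless := by
    rintro p (⟨h, _⟩ | ⟨_, h⟩)
    · exact X.loopless _ h
    · exact Y.loopless _ h

/-- The categorical product of graphs: `(v,v') ∼ (w,w')` iff `(v,v') ≠ (w,w')` and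
(`v = w` or `v ∼ w`) and (`v' = w'` or `v' ∼ w'`). -/
def catProd (X Y : GraphCat) : GraphCat where
  V := X.V × Y.V
  adj p q := p ≠ q ∧ (p.1 = q.1 ∨ X.adj p.1 q.1) ∧ (p.2 = q.2 ∨ Y.adj p.2 q.2)
  symm := by
    rintro p q ⟨hne, h1, h2⟩
    refine ⟨hne.symm, ?_, ?_⟩
    · rcases h1 with e | h
      exacts [Or.inl e.symm, Or.inr (X.symm h)]
    · rcases h2 with e | h
      exacts [Or.inl e.symm, Or.inr (Y.symm h)]
  loopless := fun p h => h.1 rfl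

/-- The box product as a bifunctor `Graph × Graph ⥤ Graph`. -/
def boxFunctor : GraphCat × GraphCat ⥤ GraphCat where
  obj p := boxProd p.1 p.2
  map {p q} f :=
    { toFun := fun v => (f.1.toFun v.1, f.2.toFun v.2)
      map_adj := by
        rintro ⟨v, v'⟩ ⟨w, w'⟩ (⟨h, e⟩ | ⟨e, h⟩)
        · rcases f.1.map_adj h with e' | a
          · exact Or.inl (Prod.ext e' (congrArg f.2.toFun e))
          · exact Or.inr (Or.inl ⟨a, congrArg f.2.toFun e⟩)
        · rcases f.2.map_adj h with e' | a
          · exact Or.inl (Prod.ext (congrArg f.1.toFun e) e')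
          · exact Or.inr (Or.inr ⟨congrArg f.1.toFun e, a⟩) }
  map_id := by intro p; apply Hom.ext'; funext v; rfl
  map_comp := by intros; apply Hom.ext'; funext v; rfl

/-- The categorical product as a bifunctor `Graph × Graph ⥤ Graph`. -/
def catFunctor : GraphCat × GraphCat ⥤ GraphCat where
  obj p := catProd p.1 p.2
  map {p q} f :=
    { toFun := fun v => (f.1.toFun v.1, f.2.toFun v.2)
      map_adj := by
        rintro ⟨v, v'⟩ ⟨w, w'⟩ ⟨hne, h1, h2⟩
        have h1' : f.1.toFun v = f.1.toFun w ∨ q.1.adj (f.1.toFun v) (f.1.toFun w) := by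
          rcases h1 with e | a
          · exact Or.inl (congrArg f.1.toFun e)
          · exact f.1.map_adj a
        have h2' : f.2.toFun v' = f.2.toFun w' ∨ q.2.adj (f.2.toFun v') (f.2.toFun w') := by
          rcases h2 with e | a
          · exact Or.inl (congrArg f.2.toFun e)
          · exact f.2.map_adj a
        by_cases hq : ((f.1.toFun v, f.2.toFun v') : q.1.V × q.2.V)
            = (f.1.toFun w, f.2.toFun w')
        · exact Or.inl hq
        · exact Or.inr ⟨hq, h1', h2'⟩ }
  map_id := by intro p; apply Hom.ext'; funext v; rfl
  map_comp := by intros; apply Hom.ext'; funext v; rfl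

end GraphCat

/-!
For a closed monoidal structure on `Graph`, each `X ⊗ -` is a left adjoint, so it preserves
colimits and epimorphisms. The unit has exactly one vertex: an endomorphism `t` of `𝟙_` induces
the natural endomorphism `λ⁻¹ ≫ t ▷ X ≫ λ` of the identity functor, which is trivial because
vertices are maps out of `I0`; and `𝟙_` is nonempty, since otherwise `I0 ≅ I0 ⊗ 𝟙_` would be
initial. Hence the vertices of `X ⊗ Y` are the pairs `tmul v w`: the projections to
`X ⊗ 𝟙_ ≅ X` and `𝟙_ ⊗ Y ≅ Y` separate them, and they exhaust `X ⊗ Y` because `X ⊗ -` preserves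
the epimorphism onto `Y` from the discrete graph on its vertices, a coproduct of copies of `𝟙_`.
The same projections show that an edge moves each coordinate along an edge or not at all, and
the images of `I1 ⊗ 𝟙_ ≅ I1` supply every edge moving a single coordinate. Edges moving both
coordinates are then present either always or never, according to whether `(s, s) ∼ (t, t)` in
`I1 ⊗ I1`: `I1` is dense in `Graph`, so, using the braiding, every such edge is an image of this
diagonal. In the first case `⊗` is `⊠`, in the second `□`.
-/

namespace GraphCat

open Limits

@[simp] lemma comp_toFun {X Y Z : GraphCat} (f : X ⟶ Y) (g : Y ⟶ Z) (v : X.V) :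
    (f ≫ g).toFun v = g.toFun (f.toFun v) := rfl

lemma hom_ext {X Y : GraphCat} {f g : X ⟶ Y} (h : ∀ v, f.toFun v = g.toFun v) : f = g :=
  Hom.ext' (funext h)

lemma congr_toFun {X Y : GraphCat} {f g : X ⟶ Y} (h : f = g) (v : X.V) :
    f.toFun v = g.toFun v :=
  congrArg (fun k : X ⟶ Y => k.toFun v) h

lemma adj_ne {X : GraphCat} {v w : X.V} (h : X.adj v w) : v ≠ w :=
  fun e => X.loopless w (e ▸ h)

lemma Hom.map_adj_of_ne {X Y : GraphCat} (f : X ⟶ Y) {v w : X.V} (h : X.adj v w)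
    (hne : f.toFun v ≠ f.toFun w) : Y.adj (f.toFun v) (f.toFun w) :=
  (f.map_adj h).resolve_left hne

def Hom.const (X : GraphCat) {Y : GraphCat} (y : Y.V) : X ⟶ Y :=
  ⟨fun _ => y, fun _ => Or.inl rfl⟩

@[simp] lemma iso_inv_hom_toFun {X Y : GraphCat} (e : X ≅ Y) (v : X.V) :
    e.inv.toFun (e.hom.toFun v) = v :=
  congr_toFun e.hom_inv_id v

lemma iso_toFun_injective {X Y : GraphCat} (e : X ≅ Y) : Function.Injective e.hom.toFun :=
  Function.LeftInverse.injective (iso_inv_hom_toFun e)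

lemma iso_adj_iff {X Y : GraphCat} (e : X ≅ Y) {v w : X.V} :
    Y.adj (e.hom.toFun v) (e.hom.toFun w) ↔ X.adj v w := by
  refine ⟨fun h => ?_, fun h => e.hom.map_adj_of_ne h ((iso_toFun_injective e).ne (adj_ne h))⟩
  rcases e.inv.map_adj h with heq | hadj
  · simp only [iso_inv_hom_toFun] at heq
    exact absurd (heq ▸ h) (Y.loopless _)
  · simpa using hadj

def isoMk {X Y : GraphCat} (f : X.V → Y.V) (g : Y.V → X.V) (hgf : Function.LeftInverse g f)
    (hfg : Function.RightInverse g f) (h : ∀ v w, Y.adj (f v) (f w) ↔ X.adj v w) : X ≅ Y where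
  hom := ⟨f, fun hvw => Or.inr ((h _ _).2 hvw)⟩
  inv := ⟨g, fun {v w} hvw => Or.inr ((h _ _).1 (by rwa [hfg v, hfg w]))⟩
  hom_inv_id := hom_ext hgf
  inv_hom_id := hom_ext hfg

def I1.src : I1.V := false

def I1.tgt : I1.V := true

lemma I1.adj_src_tgt : I1.adj I1.src I1.tgt := Bool.false_ne_true

def I1.swap : I1 ⟶ I1 := ⟨not, fun h => .inr fun e => h (Bool.not_inj e)⟩

def edge {Y : GraphCat} {y y' : Y.V} (h : Y.adj y y') : I1 ⟶ Y :=
  ⟨fun b => cond b y' y, fun {b b'} hb => .inr (by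
    cases b <;> cases b' <;> first | exact absurd rfl hb | exact h | exact Y.symm h)⟩

def discrete (S : Type) : GraphCat := ⟨S, fun _ _ => False, id, fun _ => id⟩

def discreteToSelf (Y : GraphCat) : discrete Y.V ⟶ Y := ⟨id, False.elim⟩

instance (Y : GraphCat) : Epi (discreteToSelf Y) :=
  ⟨fun _ _ h => hom_ext fun y => congr_toFun h y⟩

def complete (S : Type) : GraphCat := ⟨S, (· ≠ ·), Ne.symm, fun _ h => h rfl⟩

def toComplete {X : GraphCat} {S : Type} (f : X.V → S) : X ⟶ complete S :=
  ⟨f, fun _ => eq_or_ne _ _⟩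

lemma surjective_of_epi {X Y : GraphCat} (f : X ⟶ Y) [Epi f] : Function.Surjective f.toFun := by
  intro y
  have h := (cancel_epi f).1 (show f ≫ toComplete (fun _ => True) =
    f ≫ toComplete (fun y => ∃ x, f.toFun x = y) from hom_ext fun x => (eq_true ⟨x, rfl⟩).symm)
  exact (congr_toFun h y).mp trivial

def isInitialOfIsEmpty (X : GraphCat) [IsEmpty X.V] : IsInitial X :=
  .ofUniqueHom (fun _ => ⟨isEmptyElim, fun {v} => isEmptyElim v⟩) (fun _ _ => hom_ext isEmptyElim)

lemma natTrans_id_eq_id (α : 𝟭 GraphCat ⟶ 𝟭 GraphCat) : α = 𝟙 _ :=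
  NatTrans.ext (funext fun _ => hom_ext fun v => congr_toFun (α.naturality (Hom.const I0 v)) ⟨⟩)

section Colimits

variable {J : Type*} [Category J] {D : J ⥤ GraphCat} {c : Cocone D}

lemma exists_toFun_eq_of_isColimit (hc : IsColimit c) (x : c.pt.V) :
    ∃ j y, (c.ι.app j).toFun y = x := by
  have h := hc.hom_ext (f := toComplete fun _ => True)
    (f' := toComplete fun x => ∃ j y, (c.ι.app j).toFun y = x)
    (fun j => hom_ext fun y => (eq_true ⟨j, y, rfl⟩).symm)
  exact (congr_toFun h x).mp trivial

lemma exists_adj_preimage_of_isColimit (hc : IsColimit c) {x y : c.pt.V} (hxy : c.pt.adj x y) :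
    ∃ j a b, (D.obj j).adj a b ∧ (c.ι.app j).toFun a = x ∧ (c.ι.app j).toFun b = y := by
  let Z : GraphCat :=
    { V := c.pt.V
      adj x y := x ≠ y ∧ ∃ j a b, (D.obj j).adj a b ∧
        (c.ι.app j).toFun a = x ∧ (c.ι.app j).toFun b = y
      symm := fun ⟨hne, j, a, b, hab, ha, hb⟩ => ⟨hne.symm, j, b, a, (D.obj j).symm hab, hb, ha⟩
      loopless _ h := h.1 rfl }
  let c' : Cocone D :=
    { pt := Z
      ι := { app j := ⟨(c.ι.app j).toFun, fun {a b} hab =>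
                (eq_or_ne _ _).imp_right fun hne => ⟨hne, j, a, b, hab, rfl, rfl⟩⟩
             naturality _ _ f := hom_ext fun a => congr_toFun (c.ι.naturality f) a } }
  let incl : Z ⟶ c.pt := ⟨id, fun ⟨hne, j, a, b, hab, ha, hb⟩ =>
    .inr (ha ▸ hb ▸ (c.ι.app j).map_adj_of_ne hab (ha ▸ hb ▸ hne))⟩
  have hid : hc.desc c' ≫ incl = 𝟙 c.pt := hc.hom_ext fun j => by
    rw [← Category.assoc, hc.fac]; rfl
  have hdesc : ∀ x, (hc.desc c').toFun x = x := congr_toFun hid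
  have h := (hc.desc c').map_adj hxy
  rw [hdesc, hdesc] at h
  exact (h.resolve_left (adj_ne hxy)).2

abbrev edgeFunctor : SingleObj (End I1) ⥤ GraphCat := SingleObj.functor (MonoidHom.id _)

lemma cocone_app_toFun_eq_const {Y : GraphCat}
    (s : Cocone (CostructuredArrow.proj edgeFunctor Y ⋙ edgeFunctor))
    (j : CostructuredArrow edgeFunctor Y) (b : Bool) :
    (s.ι.app j).toFun b = (s.ι.app (CostructuredArrow.mk (Y := SingleObj.star _)
      (Hom.const I1 (j.hom.toFun b)))).toFun false :=
  congr_toFun (s.w (CostructuredArrow.homMk' j (Hom.const I1 b : I1 ⟶ I1))) false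

/-- Constant maps `I1 ⟶ Y` take care of the vertices, so no one-vertex pieces are needed. -/
def denseAtEdge (Y : GraphCat) : edgeFunctor.DenseAt Y where
  desc s := ⟨fun y => (s.ι.app (CostructuredArrow.mk (Y := SingleObj.star _)
      (Hom.const I1 y))).toFun false, fun {y y'} h => by
    let j := CostructuredArrow.mk (S := edgeFunctor) (Y := SingleObj.star _) (T := Y) (edge h)
    have h := (s.ι.app j).map_adj Bool.false_ne_true
    rwa [cocone_app_toFun_eq_const s j false, cocone_app_toFun_eq_const s j true] at h⟩
  fac s j := hom_ext fun b => (cocone_app_toFun_eq_const s j b).symm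
  uniq s m hm := hom_ext fun y =>
    congr_toFun (hm (CostructuredArrow.mk (Y := SingleObj.star _) (Hom.const I1 y))) false

end Colimits

lemma boxProd_adj_iff_catProd_adj {X Y : GraphCat} {p q : X.V × Y.V} :
    (boxProd X Y).adj p q ↔ (catProd X Y).adj p q ∧ ¬ (X.adj p.1 q.1 ∧ Y.adj p.2 q.2) := by
  obtain ⟨v, w⟩ := p
  obtain ⟨v', w'⟩ := q
  simp only [boxProd, catProd, ne_eq, Prod.mk.injEq]
  have := @adj_ne X v v'
  have := @adj_ne Y w w'
  tauto

abbrev boxStruct : MonoidalCategoryStruct GraphCat where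
  tensorObj := boxProd
  tensorHom f g := boxFunctor.map ((f, g) : (_, _) ⟶ (_, _))
  whiskerLeft X _ _ g := boxFunctor.map ((𝟙 X, g) : (_, _) ⟶ (_, _))
  whiskerRight f Y := boxFunctor.map ((f, 𝟙 Y) : (_, _) ⟶ (_, _))
  tensorUnit := I0
  associator X Y Z :=
    isoMk (fun p => (p.1.1, (p.1.2, p.2))) (fun p => ((p.1, p.2.1), p.2.2)) (fun _ => rfl)
      (fun _ => rfl) (by
        rintro ⟨⟨a, b⟩, c⟩ ⟨⟨a', b'⟩, c'⟩
        simp only [boxProd, Prod.mk.injEq]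
        tauto)
  leftUnitor X := isoMk (fun p => p.2) (fun v => (⟨⟩, v)) (fun _ => rfl) (fun _ => rfl) (by
    rintro ⟨⟨⟩, v⟩ ⟨⟨⟩, w⟩
    simp [boxProd, I0])
  rightUnitor X := isoMk (fun p => p.1) (fun v => (v, ⟨⟩)) (fun _ => rfl) (fun _ => rfl) (by
    rintro ⟨v, ⟨⟩⟩ ⟨w, ⟨⟩⟩
    simp [boxProd, I0])

abbrev boxMonoidal : MonoidalCategory GraphCat :=
  letI := boxStruct
  .ofTensorHom
    (id_tensorHom_id := fun _ _ => rfl)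
    (id_tensorHom := fun _ _ _ _ => rfl)
    (tensorHom_id := fun _ _ => rfl)
    (tensorHom_comp_tensorHom := fun _ _ _ _ => rfl)
    (associator_naturality := fun _ _ _ => rfl)
    (leftUnitor_naturality := fun _ => rfl)
    (rightUnitor_naturality := fun _ => rfl)
    (pentagon := fun _ _ _ _ => rfl)
    (triangle := fun _ _ => rfl)

abbrev boxSymmetric : @SymmetricCategory GraphCat _ boxMonoidal :=
  letI := boxMonoidal
  { braiding X Y := isoMk (X := boxProd X Y) (Y := boxProd Y X) (fun p => (p.2, p.1))
      (fun p => (p.2, p.1)) (fun _ => rfl) (fun _ => rfl) (by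
        rintro ⟨a, b⟩ ⟨a', b'⟩
        simp only [boxProd]
        tauto)
    braiding_naturality_right _ _ _ _ := rfl
    braiding_naturality_left _ _ := rfl
    hexagon_forward _ _ _ := rfl
    hexagon_reverse _ _ _ := rfl
    symmetry _ _ := rfl }

def boxIhom (X Z : GraphCat) : GraphCat where
  V := X ⟶ Z
  adj g h := g ≠ h ∧ ∀ v, g.toFun v = h.toFun v ∨ Z.adj (g.toFun v) (h.toFun v)
  symm := fun ⟨hne, hadj⟩ =>
    ⟨hne.symm, fun v => (hadj v).imp Eq.symm Z.symm⟩
  loopless _ h := h.1 rfl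

abbrev boxClosed : @MonoidalClosed GraphCat _ boxMonoidal :=
  letI := boxMonoidal
  { closed X :=
    { rightAdj :=
        { obj Z := boxIhom X Z
          map u := ⟨fun g => g ≫ u, fun {g h} ⟨_, hadj⟩ =>
            (eq_or_ne (g ≫ u) (h ≫ u)).imp_right fun hne =>
              ⟨hne, fun v => (hadj v).elim (fun e => Or.inl (congrArg u.toFun e)) u.map_adj⟩⟩ }
      adj := Adjunction.mkOfHomEquiv
        { homEquiv Y Z :=
            { toFun f := ⟨fun y => ⟨fun x => f.toFun (x, y), fun h => f.map_adj (Or.inl ⟨h, rfl⟩)⟩,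
                fun {y y'} h => (eq_or_ne _ _).imp_right fun hne =>
                  ⟨hne, fun x => f.map_adj (Or.inr ⟨rfl, h⟩)⟩⟩
              invFun g := ⟨fun p => (g.toFun p.2).toFun p.1, by
                rintro ⟨x, y⟩ ⟨x', y'⟩ (⟨hx, rfl⟩ | ⟨rfl, hy⟩)
                · exact (g.toFun y).map_adj hx
                · rcases g.map_adj hy with e | ⟨_, hadj⟩
                  · exact .inl (congr_toFun e x)
                  · exact hadj x⟩
              left_inv _ := rfl
              right_inv _ := rfl }
          homEquiv_naturality_left_symm _ _ := rfl
          homEquiv_naturality_right _ _ := rfl } } }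

abbrev catStruct : MonoidalCategoryStruct GraphCat where
  tensorObj := catProd
  tensorHom f g := catFunctor.map ((f, g) : (_, _) ⟶ (_, _))
  whiskerLeft X _ _ g := catFunctor.map ((𝟙 X, g) : (_, _) ⟶ (_, _))
  whiskerRight f Y := catFunctor.map ((f, 𝟙 Y) : (_, _) ⟶ (_, _))
  tensorUnit := I0
  associator X Y Z :=
    isoMk (fun p => (p.1.1, (p.1.2, p.2))) (fun p => ((p.1, p.2.1), p.2.2)) (fun _ => rfl)
      (fun _ => rfl) (by
        rintro ⟨⟨a, b⟩, c⟩ ⟨⟨a', b'⟩, c'⟩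
        simp only [catProd, ne_eq, Prod.mk.injEq]
        tauto)
  leftUnitor X := isoMk (fun p => p.2) (fun v => (⟨⟩, v)) (fun _ => rfl) (fun _ => rfl) (by
    rintro ⟨⟨⟩, v⟩ ⟨⟨⟩, w⟩
    simp only [catProd, I0, ne_eq, Prod.mk.injEq, true_and, or_false]
    have := @adj_ne X v w
    tauto)
  rightUnitor X := isoMk (fun p => p.1) (fun v => (v, ⟨⟩)) (fun _ => rfl) (fun _ => rfl) (by
    rintro ⟨v, ⟨⟩⟩ ⟨w, ⟨⟩⟩
    simp only [catProd, I0, ne_eq, Prod.mk.injEq, and_true, or_false]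
    have := @adj_ne X v w
    tauto)

abbrev catMonoidal : MonoidalCategory GraphCat :=
  letI := catStruct
  .ofTensorHom
    (id_tensorHom_id := fun _ _ => rfl)
    (id_tensorHom := fun _ _ _ _ => rfl)
    (tensorHom_id := fun _ _ => rfl)
    (tensorHom_comp_tensorHom := fun _ _ _ _ => rfl)
    (associator_naturality := fun _ _ _ => rfl)
    (leftUnitor_naturality := fun _ => rfl)
    (rightUnitor_naturality := fun _ => rfl)
    (pentagon := fun _ _ _ _ => rfl)
    (triangle := fun _ _ => rfl)

abbrev catSymmetric : @SymmetricCategory GraphCat _ catMonoidal :=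
  letI := catMonoidal
  { braiding X Y := isoMk (X := catProd X Y) (Y := catProd Y X) (fun p => (p.2, p.1))
      (fun p => (p.2, p.1)) (fun _ => rfl) (fun _ => rfl) (by
        rintro ⟨a, b⟩ ⟨a', b'⟩
        simp only [catProd, ne_eq, Prod.mk.injEq]
        tauto)
    braiding_naturality_right _ _ _ _ := rfl
    braiding_naturality_left _ _ := rfl
    hexagon_forward _ _ _ := rfl
    hexagon_reverse _ _ _ := rfl
    symmetry _ _ := rfl }

def catIhom (X Z : GraphCat) : GraphCat where
  V := X ⟶ Z
  adj g h := g ≠ h ∧ ∀ v w, (v = w ∨ X.adj v w) →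
    g.toFun v = h.toFun w ∨ Z.adj (g.toFun v) (h.toFun w)
  symm := fun ⟨hne, hadj⟩ => ⟨hne.symm, fun v w hvw =>
    (hadj w v (hvw.imp Eq.symm X.symm)).imp Eq.symm Z.symm⟩
  loopless _ h := h.1 rfl

abbrev catClosed : @MonoidalClosed GraphCat _ catMonoidal :=
  letI := catMonoidal
  { closed X :=
    { rightAdj :=
        { obj Z := catIhom X Z
          map u := ⟨fun g => g ≫ u, fun {g h} ⟨_, hadj⟩ =>
            (eq_or_ne (g ≫ u) (h ≫ u)).imp_right fun hne => ⟨hne, fun v w hvw =>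
              (hadj v w hvw).elim (fun e => Or.inl (congrArg u.toFun e)) u.map_adj⟩⟩ }
      adj := Adjunction.mkOfHomEquiv
        { homEquiv Y Z :=
            { toFun f := ⟨fun y => ⟨fun x => f.toFun (x, y), fun h =>
                  f.map_adj ⟨fun e => adj_ne h (congrArg Prod.fst e), Or.inr h, Or.inl rfl⟩⟩,
                fun {y y'} h => (eq_or_ne _ _).imp_right fun hne => ⟨hne, fun x x' hx =>
                  f.map_adj ⟨fun e => adj_ne h (congrArg Prod.snd e), hx, Or.inr h⟩⟩⟩
              invFun g := ⟨fun p => (g.toFun p.2).toFun p.1, by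
                rintro ⟨x, y⟩ ⟨x', y'⟩ ⟨hne, hx, rfl | hy⟩
                · rcases hx with rfl | hx
                  · exact absurd rfl hne
                  · exact (g.toFun y).map_adj hx
                · rcases g.map_adj hy with e | ⟨_, hadj⟩
                  · rcases hx with rfl | hx
                    · exact .inl (congr_toFun e x)
                    · exact e ▸ (g.toFun y').map_adj hx
                  · exact hadj x x' hx⟩
              left_inv _ := rfl
              right_inv _ := rfl }
          homEquiv_naturality_left_symm _ _ := rfl
          homEquiv_naturality_right _ _ := rfl } } }

lemma not_nonempty_boxFunctor_iso_catFunctor : ¬ Nonempty (boxFunctor ≅ catFunctor) := by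
  rintro ⟨e⟩
  let i := e.app (I1, I1)
  have hne : ((false, false) : (boxProd I1 I1).V) ≠ (true, true) :=
    fun h => Bool.false_ne_true (congrArg Prod.fst h)
  have hcat : (catProd I1 I1).adj (i.hom.toFun (false, false)) (i.hom.toFun (true, true)) :=
    ⟨(iso_toFun_injective i).ne hne, eq_or_ne _ _, eq_or_ne _ _⟩
  rcases (iso_adj_iff i).1 hcat with ⟨_, h⟩ | ⟨h, _⟩ <;> exact Bool.false_ne_true h

section Monoidal

variable [MonoidalCategory GraphCat]

lemma endUnit_eq_id (t : 𝟙_ GraphCat ⟶ 𝟙_ GraphCat) : t = 𝟙 _ := by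
  let α : 𝟭 GraphCat ⟶ 𝟭 GraphCat :=
    { app X := (λ_ X).inv ≫ t ▷ X ≫ (λ_ X).hom
      naturality X Y f := by
        dsimp only [Functor.id_obj, Functor.id_map]
        rw [leftUnitor_inv_naturality_assoc, whisker_exchange_assoc, leftUnitor_naturality]
        simp only [Category.assoc] }
  have h := congrArg (fun β : 𝟭 GraphCat ⟶ 𝟭 GraphCat => β.app (𝟙_ _)) (natTrans_id_eq_id α)
  simpa [α, unitors_equal, unitors_inv_equal] using h

instance : Subsingleton (𝟙_ GraphCat).V :=
  ⟨fun u u' => (congr_toFun (endUnit_eq_id (Hom.const _ u')) u).symm⟩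

instance : Subsingleton (𝟙_ GraphCat ⊗ 𝟙_ GraphCat).V :=
  ⟨fun _ _ => iso_toFun_injective (λ_ _) (Subsingleton.elim _ _)⟩

variable [MonoidalClosed GraphCat]

lemma nonempty_unit : Nonempty (𝟙_ GraphCat).V := by
  by_contra h
  have := not_nonempty_iff.1 h
  have hI : IsInitial (I0 ⊗ 𝟙_ GraphCat) := (isInitialOfIsEmpty _).isInitialObj (tensorLeft I0)
  exact h ⟨((ρ_ I0).inv ≫ hI.to _).toFun ⟨⟩⟩

noncomputable def unitVertex : (𝟙_ GraphCat).V := Classical.choice nonempty_unit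

noncomputable def tmul {X Y : GraphCat} (v : X.V) (w : Y.V) : (X ⊗ Y).V :=
  (Hom.const (𝟙_ GraphCat) v ⊗ₘ Hom.const (𝟙_ GraphCat) w).toFun
    ((λ_ (𝟙_ GraphCat)).inv.toFun unitVertex)

variable {X X' Y Y' : GraphCat}

lemma tensorHom_tmul (f : X ⟶ X') (g : Y ⟶ Y') (v : X.V) (w : Y.V) :
    (f ⊗ₘ g).toFun (tmul v w) = tmul (f.toFun v) (g.toFun w) :=
  congr_toFun (tensorHom_comp_tensorHom _ _ _ _) _

lemma whiskerLeft_tmul (g : Y ⟶ Y') (v : X.V) (w : Y.V) :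
    (X ◁ g).toFun (tmul v w) = tmul v (g.toFun w) := by
  rw [← id_tensorHom, tensorHom_tmul]; rfl

lemma whiskerRight_tmul (f : X ⟶ X') (v : X.V) (w : Y.V) :
    (f ▷ Y).toFun (tmul v w) = tmul (f.toFun v) w := by
  rw [← tensorHom_id, tensorHom_tmul]; rfl

lemma rightUnitor_tmul (v : X.V) (u : (𝟙_ GraphCat).V) : (ρ_ X).hom.toFun (tmul v u) = v := by
  have h : (Hom.const (𝟙_ GraphCat) v ⊗ₘ Hom.const _ u) ≫ (ρ_ X).hom =
      (ρ_ _).hom ≫ Hom.const _ v := by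
    rw [endUnit_eq_id (Hom.const _ u), tensorHom_id, rightUnitor_naturality]
  exact congr_toFun h _

lemma leftUnitor_tmul (u : (𝟙_ GraphCat).V) (w : Y.V) : (λ_ Y).hom.toFun (tmul u w) = w := by
  have h : (Hom.const (𝟙_ GraphCat) u ⊗ₘ Hom.const (𝟙_ GraphCat) w) ≫ (λ_ Y).hom =
      (λ_ (𝟙_ GraphCat)).hom ≫ Hom.const _ w := by
    rw [endUnit_eq_id (Hom.const _ u), id_tensorHom, leftUnitor_naturality]
  exact congr_toFun h _

variable (X Y) in
noncomputable def tensorFst : X ⊗ Y ⟶ X := X ◁ Hom.const Y unitVertex ≫ (ρ_ X).hom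

variable (X Y) in
noncomputable def tensorSnd : X ⊗ Y ⟶ Y := Hom.const X unitVertex ▷ Y ≫ (λ_ Y).hom

@[simp] lemma tensorFst_tmul (v : X.V) (w : Y.V) : (tensorFst X Y).toFun (tmul v w) = v := by
  simp only [tensorFst, comp_toFun, whiskerLeft_tmul, rightUnitor_tmul]

@[simp] lemma tensorSnd_tmul (v : X.V) (w : Y.V) : (tensorSnd X Y).toFun (tmul v w) = w := by
  simp only [tensorSnd, comp_toFun, whiskerRight_tmul, leftUnitor_tmul]

lemma tmul_injective {v v' : X.V} {w w' : Y.V} (h : tmul v w = tmul v' w') : v = v' ∧ w = w' :=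
  ⟨by simpa using congrArg (tensorFst X Y).toFun h, by simpa using congrArg (tensorSnd X Y).toFun h⟩

noncomputable def discreteCofanIsColimit (S : Type) :
    IsColimit (Cofan.mk (discrete S) fun s => Hom.const (𝟙_ GraphCat) s) :=
  Cofan.IsColimit.mk _ (fun t => ⟨fun s => (t.inj s).toFun unitVertex, False.elim⟩)
    (fun _ _ => hom_ext fun u => by rw [Subsingleton.elim u unitVertex]; rfl)
    (fun _ _ hm => hom_ext fun s => congr_toFun (hm s) unitVertex)

lemma tmul_surjective (x : (X ⊗ Y).V) : ∃ v w, tmul v w = x := by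
  obtain ⟨x, rfl⟩ := surjective_of_epi ((tensorLeft X).map (discreteToSelf Y)) x
  obtain ⟨⟨s⟩, x, rfl⟩ := exists_toFun_eq_of_isColimit
    (isColimitOfPreserves (tensorLeft X) (discreteCofanIsColimit Y.V)) x
  obtain ⟨v, rfl⟩ : ∃ v, tmul v unitVertex = x :=
    ⟨_, iso_toFun_injective (ρ_ X) (rightUnitor_tmul _ _)⟩
  refine ⟨v, s, ?_⟩
  change _ = (X ◁ discreteToSelf Y).toFun ((X ◁ Hom.const (𝟙_ GraphCat) s).toFun _)
  rw [whiskerLeft_tmul, whiskerLeft_tmul]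
  rfl

variable (X Y) in
noncomputable def tmulEquiv : X.V × Y.V ≃ (X ⊗ Y).V :=
  Equiv.ofBijective (fun p => tmul p.1 p.2)
    ⟨fun _ _ h => Prod.ext (tmul_injective h).1 (tmul_injective h).2,
      fun x => let ⟨v, w, h⟩ := tmul_surjective x; ⟨(v, w), h⟩⟩

lemma adj_tmul_map (f : X ⟶ X') (g : Y ⟶ Y') {v v' : X.V} {w w' : Y.V}
    (h : (X ⊗ Y).adj (tmul v w) (tmul v' w'))
    (hne : f.toFun v ≠ f.toFun v' ∨ g.toFun w ≠ g.toFun w') :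
    (X' ⊗ Y').adj (tmul (f.toFun v) (g.toFun w)) (tmul (f.toFun v') (g.toFun w')) := by
  have := (f ⊗ₘ g).map_adj_of_ne h (by
    rw [tensorHom_tmul, tensorHom_tmul]
    exact fun e => hne.elim (· (tmul_injective e).1) (· (tmul_injective e).2))
  rwa [tensorHom_tmul, tensorHom_tmul] at this

lemma adj_tmul_left {v v' : X.V} (hv : X.adj v v') (w : Y.V) :
    (X ⊗ Y).adj (tmul v w) (tmul v' w) := by
  have h : (I1 ⊗ 𝟙_ GraphCat).adj (tmul I1.src unitVertex) (tmul I1.tgt unitVertex) := by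
    rw [← iso_adj_iff (ρ_ I1), rightUnitor_tmul, rightUnitor_tmul]
    exact I1.adj_src_tgt
  exact adj_tmul_map (edge hv) (Hom.const _ w) h (.inl (adj_ne hv))

lemma adj_tmul_right (v : X.V) {w w' : Y.V} (hw : Y.adj w w') :
    (X ⊗ Y).adj (tmul v w) (tmul v w') := by
  have h : (𝟙_ GraphCat ⊗ I1).adj (tmul unitVertex I1.src) (tmul unitVertex I1.tgt) := by
    rw [← iso_adj_iff (λ_ I1), leftUnitor_tmul, leftUnitor_tmul]
    exact I1.adj_src_tgt
  exact adj_tmul_map (Hom.const _ v) (edge hw) h (.inr (adj_ne hw))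

def HasDiagonalEdge : Prop := (I1 ⊗ I1).adj (tmul I1.src I1.src) (tmul I1.tgt I1.tgt)

lemma adj_tmul_of_hasDiagonalEdge (hD : HasDiagonalEdge) {v v' : X.V} {w w' : Y.V}
    (hv : X.adj v v') (hw : Y.adj w w') : (X ⊗ Y).adj (tmul v w) (tmul v' w') :=
  adj_tmul_map (edge hv) (edge hw) hD (.inl (adj_ne hv))

lemma adj_tmul_src_tgt {v v' : X.V} {w w' : Y.V} (h : (X ⊗ Y).adj (tmul v w) (tmul v' w'))
    (hw : w ≠ w') : (X ⊗ I1).adj (tmul v I1.src) (tmul v' I1.tgt) := by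
  obtain ⟨j, a, b, hab, ha, hb⟩ :=
    exists_adj_preimage_of_isColimit (isColimitOfPreserves (tensorLeft X) (denseAtEdge Y)) h
  obtain ⟨x, i, rfl⟩ := tmul_surjective (X := X) (Y := I1) a
  obtain ⟨x', i', rfl⟩ := tmul_surjective (X := X) (Y := I1) b
  obtain ⟨rfl, hi⟩ := tmul_injective ((whiskerLeft_tmul (Y := I1) j.hom x i).symm.trans ha)
  obtain ⟨rfl, hi'⟩ := tmul_injective ((whiskerLeft_tmul (Y := I1) j.hom x' i').symm.trans hb)
  cases i <;> cases i'
  · exact absurd (hi.symm.trans hi') hw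
  · exact hab
  · exact adj_tmul_map (𝟙 X) I1.swap hab (.inr Bool.false_ne_true)
  · exact absurd (hi.symm.trans hi') hw

variable [BraidedCategory GraphCat]

lemma braiding_tmul (v : X.V) (w : Y.V) : (β_ X Y).hom.toFun (tmul v w) = tmul w v :=
  (congr_toFun (BraidedCategory.braiding_naturality (Hom.const (𝟙_ GraphCat) v)
      (Hom.const (𝟙_ GraphCat) w)) ((λ_ (𝟙_ GraphCat)).inv.toFun unitVertex)).trans
    (congrArg (Hom.const (𝟙_ GraphCat) w ⊗ₘ Hom.const (𝟙_ GraphCat) v).toFun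
      (Subsingleton.elim _ _))

lemma hasDiagonalEdge_of_adj_tmul {v v' : X.V} {w w' : Y.V}
    (h : (X ⊗ Y).adj (tmul v w) (tmul v' w')) (hv : v ≠ v') (hw : w ≠ w') : HasDiagonalEdge := by
  have h' := (iso_adj_iff (β_ X I1)).2 (adj_tmul_src_tgt h hw)
  rw [braiding_tmul, braiding_tmul] at h'
  exact adj_tmul_src_tgt h' hv

lemma adj_tmul_iff {v v' : X.V} {w w' : Y.V} :
    (X ⊗ Y).adj (tmul v w) (tmul v' w') ↔
      (catProd X Y).adj (v, w) (v', w') ∧ (X.adj v v' → Y.adj w w' → HasDiagonalEdge) := by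
  constructor
  · intro h
    refine ⟨⟨fun e => adj_ne h (by rw [(Prod.mk.inj e).1, (Prod.mk.inj e).2]), ?_, ?_⟩,
      fun hv hw => hasDiagonalEdge_of_adj_tmul h (adj_ne hv) (adj_ne hw)⟩
    · simpa using (tensorFst X Y).map_adj h
    · simpa using (tensorSnd X Y).map_adj h
  · rintro ⟨⟨hne, rfl | hv, rfl | hw⟩, hD⟩
    · exact absurd rfl hne
    · exact adj_tmul_right v hw
    · exact adj_tmul_left hv w
    · exact adj_tmul_of_hasDiagonalEdge (hD hv hw) hv hw

noncomputable def catProdIsoTensor (hD : HasDiagonalEdge) (X Y : GraphCat) :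
    catProd X Y ≅ X ⊗ Y :=
  isoMk (tmulEquiv X Y) (tmulEquiv X Y).symm (tmulEquiv X Y).symm_apply_apply
    (tmulEquiv X Y).apply_symm_apply fun _ _ => adj_tmul_iff.trans (and_iff_left fun _ _ => hD)

noncomputable def boxProdIsoTensor (hD : ¬ HasDiagonalEdge) (X Y : GraphCat) :
    boxProd X Y ≅ X ⊗ Y :=
  isoMk (tmulEquiv X Y) (tmulEquiv X Y).symm (tmulEquiv X Y).symm_apply_apply
    (tmulEquiv X Y).apply_symm_apply fun _ _ => adj_tmul_iff.trans <|
      (and_congr_right fun _ => by simp only [hD, imp_false, not_and]).trans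
        boxProd_adj_iff_catProd_adj.symm

theorem nonempty_tensor_iso_boxFunctor_or_catFunctor :
    Nonempty (tensor GraphCat ≅ boxFunctor) ∨ Nonempty (tensor GraphCat ≅ catFunctor) := by
  by_cases hD : HasDiagonalEdge
  · exact .inr ⟨(NatIso.ofComponents (fun p => catProdIsoTensor hD p.1 p.2)
      fun f => hom_ext fun _ => (tensorHom_tmul (Prod.fst f) (Prod.snd f) _ _).symm).symm⟩
  · exact .inl ⟨(NatIso.ofComponents (fun p => boxProdIsoTensor hD p.1 p.2)
      fun f => hom_ext fun _ => (tensorHom_tmul (Prod.fst f) (Prod.snd f) _ _).symm).symm⟩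

end Monoidal

end GraphCat

open GraphCat

/-- The category of (reflexive) graphs carries, up to isomorphism of the tensor
product, exactly two closed symmetric monoidal structures: the box product and the
categorical product.  Precisely: (i) for any closed symmetric monoidal structure on
`Graph`, the tensor product functor is naturally isomorphic either to the box product
or to the categorical product; (ii) and (iii) both the box product and the categorical
product do underlie closed symmetric monoidal structures, each with unit the one-vertex
graph `I₀`; and (iv) these two products are not naturally isomorphic. -/
theorem graph_closed_symmetric_monoidal_classification :
    (∀ M : MonoidalCategory GraphCat,
        @SymmetricCategory GraphCat _ M → @MonoidalClosed GraphCat _ M →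
        (Nonempty (@MonoidalCategory.tensor GraphCat _ M ≅ boxFunctor) ∨
         Nonempty (@MonoidalCategory.tensor GraphCat _ M ≅ catFunctor))) ∧
    (∃ M : MonoidalCategory GraphCat,
        Nonempty (@SymmetricCategory GraphCat _ M) ∧
        Nonempty (@MonoidalClosed GraphCat _ M) ∧
        M.tensorUnit = I0 ∧
        Nonempty (@MonoidalCategory.tensor GraphCat _ M ≅ boxFunctor)) ∧
    (∃ M : MonoidalCategory GraphCat,
        Nonempty (@SymmetricCategory GraphCat _ M) ∧
        Nonempty (@MonoidalClosed GraphCat _ M) ∧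
        M.tensorUnit = I0 ∧
        Nonempty (@MonoidalCategory.tensor GraphCat _ M ≅ catFunctor)) ∧
    ¬ Nonempty (boxFunctor ≅ catFunctor) :=
  ⟨fun _ _ _ => nonempty_tensor_iso_boxFunctor_or_catFunctor,
    ⟨boxMonoidal, ⟨boxSymmetric⟩, ⟨boxClosed⟩, rfl, ⟨NatIso.ofComponents fun _ => Iso.refl _⟩⟩,
    ⟨catMonoidal, ⟨catSymmetric⟩, ⟨catClosed⟩, rfl, ⟨NatIso.ofComponents fun _ => Iso.refl _⟩⟩,
    not_nonempty_boxFunctor_iso_catFunctor⟩
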